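/- arXiv:2310.08833 — 3 statements merged into one kernel-verified Lean document; each statement's English description precedes it below -/
import Mathlib

section
/- Suppose P is row-stochastic on finite S and there exist m ≥ 1, q ∈ (0,1], and a probability vector ψ such that P^m(s,·) ≥ q·ψ(·) for all s (Doeblin condition). Then for any v : S → ℝ, sp(P^m v) ≤ (1 − q)·sp(v). -/
open Matrix

lemma pow_entry_nonneg {S : Type*} [Fintype S] [DecidableEq S]
    (P : Matrix S S ℝ) (hP0 : ∀ s s', 0 ≤ P s s') (n : ℕ) :
    ∀ s s', 0 ≤ (P ^ n) s s' := by
  induction n with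
  | zero =>
    intro s s'
    by_cases h : s = s' <;> simp [Matrix.one_apply, h]
  | succ k ih =>
    intro s s'
    rw [pow_succ, Matrix.mul_apply]
    exact Finset.sum_nonneg fun x _ => mul_nonneg (ih s x) (hP0 x s')

lemma pow_row_sum_one {S : Type*} [Fintype S] [DecidableEq S]
    (P : Matrix S S ℝ) (hP1 : ∀ s, ∑ s', P s s' = 1) (n : ℕ) :
    ∀ s, ∑ s', (P ^ n) s s' = 1 := by
  induction n with
  | zero => intro s; simp [Matrix.one_apply]
  | succ k ih =>
    intro s
    simp only [pow_succ, Matrix.mul_apply]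
    rw [Finset.sum_comm]
    calc ∑ x, ∑ s', (P ^ k) s x * P x s'
        = ∑ x, (P ^ k) s x * ∑ s', P x s' := by
          simp [Finset.mul_sum]
      _ = ∑ x, (P ^ k) s x := by simp [hP1]
      _ = 1 := ih s

/-- Doeblin condition implies the span contraction: sp(P^m v) ≤ (1 − q)·sp(v). -/
theorem span_contraction_of_doeblin {S : Type*} [Fintype S] [Nonempty S] [DecidableEq S]
    (P : Matrix S S ℝ) (hP0 : ∀ s s', 0 ≤ P s s') (hP1 : ∀ s, ∑ s', P s s' = 1)
    (m : ℕ) (hm : 1 ≤ m) (q : ℝ) (hq0 : 0 < q) (hq1 : q ≤ 1)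
    (ψ : S → ℝ) (hψ0 : ∀ s, 0 ≤ ψ s) (hψ1 : ∑ s, ψ s = 1)
    (hdoeblin : ∀ s s', q * ψ s' ≤ (P ^ m) s s')
    (v : S → ℝ)
    (sp : (S → ℝ) → ℝ)
    (hsp : ∀ u : S → ℝ, sp u =
      (Finset.univ.sup' Finset.univ_nonempty u) - (Finset.univ.inf' Finset.univ_nonempty u)) :
    sp ((P ^ m) *ᵥ v) ≤ (1 - q) * sp v := by
  set Q : Matrix S S ℝ := P ^ m with hQdef
  have hQ1 : ∀ s, ∑ s', Q s s' = 1 := pow_row_sum_one P hP1 m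
  set M := Finset.univ.sup' Finset.univ_nonempty v with hM
  set L := Finset.univ.inf' Finset.univ_nonempty v with hL
  have hvM : ∀ x, v x ≤ M := fun x => Finset.le_sup' v (Finset.mem_univ x)
  have hvL : ∀ x, L ≤ v x := fun x => Finset.inf'_le v (Finset.mem_univ x)
  have hcs : ∀ s, ∑ x, (Q s x - q * ψ x) = 1 - q := by
    intro s
    rw [Finset.sum_sub_distrib, hQ1, ← Finset.mul_sum, hψ1, mul_one]
  have hc0 : ∀ s x, 0 ≤ Q s x - q * ψ x := fun s x => sub_nonneg.2 (hdoeblin s x)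
  have key : ∀ s t, (Q *ᵥ v) s - (Q *ᵥ v) t ≤ (1 - q) * (M - L) := by
    intro s t
    have hs : (Q *ᵥ v) s = (∑ x, (Q s x - q * ψ x) * v x) + q * ∑ x, ψ x * v x := by
      simp [Matrix.mulVec, dotProduct, sub_mul, Finset.sum_sub_distrib, Finset.mul_sum,
        mul_assoc]
    have ht : (Q *ᵥ v) t = (∑ x, (Q t x - q * ψ x) * v x) + q * ∑ x, ψ x * v x := by
      simp [Matrix.mulVec, dotProduct, sub_mul, Finset.sum_sub_distrib, Finset.mul_sum,
        mul_assoc]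
    have hub : ∑ x, (Q s x - q * ψ x) * v x ≤ (1 - q) * M := by
      calc ∑ x, (Q s x - q * ψ x) * v x
          ≤ ∑ x, (Q s x - q * ψ x) * M := by
            exact Finset.sum_le_sum fun x _ =>
              mul_le_mul_of_nonneg_left (hvM x) (hc0 s x)
        _ = (1 - q) * M := by rw [← Finset.sum_mul, hcs s]
    have hlb : (1 - q) * L ≤ ∑ x, (Q t x - q * ψ x) * v x := by
      calc (1 - q) * L = ∑ x, (Q t x - q * ψ x) * L := by rw [← Finset.sum_mul, hcs t]
        _ ≤ ∑ x, (Q t x - q * ψ x) * v x :=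
            Finset.sum_le_sum fun x _ => mul_le_mul_of_nonneg_left (hvL x) (hc0 t x)
    rw [hs, ht]
    have := sub_le_sub hub hlb
    linarith [this]
  rw [hsp, hsp]
  obtain ⟨s0, -, hs0⟩ := Finset.exists_mem_eq_sup' Finset.univ_nonempty (Q *ᵥ v)
  obtain ⟨t0, -, ht0⟩ := Finset.exists_mem_eq_inf' Finset.univ_nonempty (Q *ᵥ v)
  rw [hs0, ht0]
  exact key s0 t0
end

section
/- Let P be a row-stochastic matrix on finite S satisfying the Doeblin condition P^m(s,·) ≥ q ψ(·) with m ≥ 1, q ∈ (0,1], and let η be its stationary distribution. For any r : S → [0,1], setting α = ∑_s η(s) r(s), the function u(s) = ∑_{t=0}^∞ (P^t r − α·1)(s) is well-defined (the series converges absolutely) and (u, α) solves the Poisson equation r − α·1 = (I − P)u. -/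
open Matrix Finset

section aux
variable {S : Type*} [Fintype S] [Nonempty S]

private lemma wsum_le_sup (w f : S → ℝ) (c : ℝ) (hw : ∀ s, 0 ≤ w s)
    (h1 : ∑ s, w s = c) :
    ∑ s, w s * f s ≤ c * univ.sup' univ_nonempty f := by
  calc ∑ s, w s * f s ≤ ∑ s, w s * univ.sup' univ_nonempty f :=
        Finset.sum_le_sum fun s _ =>
          mul_le_mul_of_nonneg_left (Finset.le_sup' f (mem_univ s)) (hw s)
    _ = c * univ.sup' univ_nonempty f := by rw [← Finset.sum_mul, h1]

private lemma inf_le_wsum (w f : S → ℝ) (c : ℝ) (hw : ∀ s, 0 ≤ w s)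
    (h1 : ∑ s, w s = c) :
    c * univ.inf' univ_nonempty f ≤ ∑ s, w s * f s := by
  calc c * univ.inf' univ_nonempty f = ∑ s, w s * univ.inf' univ_nonempty f := by
        rw [← Finset.sum_mul, h1]
    _ ≤ ∑ s, w s * f s :=
        Finset.sum_le_sum fun s _ =>
          mul_le_mul_of_nonneg_left (Finset.inf'_le f (mem_univ s)) (hw s)

private lemma osc_contract (Q : Matrix S S ℝ) (hQ1 : ∀ s, ∑ x, Q s x = 1)
    (q : ℝ) (ψ : S → ℝ) (hψ1 : ∑ s, ψ s = 1)
    (hd : ∀ s s', q * ψ s' ≤ Q s s') (f : S → ℝ) :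
    univ.sup' univ_nonempty (Q *ᵥ f) - univ.inf' univ_nonempty (Q *ᵥ f)
      ≤ (1 - q) * (univ.sup' univ_nonempty f - univ.inf' univ_nonempty f) := by
  obtain ⟨s, -, hs⟩ := Finset.exists_mem_eq_sup' univ_nonempty (Q *ᵥ f)
  obtain ⟨s', -, hs'⟩ := Finset.exists_mem_eq_inf' univ_nonempty (Q *ᵥ f)
  rw [hs, hs']
  have key : ∀ a, (Q *ᵥ f) a = (∑ x, (Q a x - q * ψ x) * f x) + q * ∑ x, ψ x * f x := by
    intro a
    simp only [mulVec, dotProduct]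
    rw [Finset.mul_sum, ← Finset.sum_add_distrib]
    congr 1; ext x; ring
  have hw : ∀ a x, 0 ≤ Q a x - q * ψ x := fun a x => sub_nonneg.2 (hd a x)
  have hws : ∀ a, ∑ x, (Q a x - q * ψ x) = 1 - q := by
    intro a
    rw [Finset.sum_sub_distrib, hQ1, ← Finset.mul_sum, hψ1, mul_one]
  have h1 := wsum_le_sup (fun x => Q s x - q * ψ x) f (1 - q) (hw s) (hws s)
  have h2 := inf_le_wsum (fun x => Q s' x - q * ψ x) f (1 - q) (hw s') (hws s')
  rw [key s, key s']
  linarith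
end aux

/-- Under the Doeblin condition, with α the stationary average reward,
u(s) = ∑_{t≥0} ((P^t r)(s) − α) converges absolutely and (u, α) solves the
Poisson equation r − α·1 = (I − P)u. -/
theorem poisson_solution_of_doeblin {S : Type*} [Fintype S] [Nonempty S] [DecidableEq S]
    (P : Matrix S S ℝ) (hP0 : ∀ s s', 0 ≤ P s s') (hP1 : ∀ s, ∑ s', P s s' = 1)
    (m : ℕ) (hm : 1 ≤ m) (q : ℝ) (hq0 : 0 < q) (hq1 : q ≤ 1)
    (ψ : S → ℝ) (hψ0 : ∀ s, 0 ≤ ψ s) (hψ1 : ∑ s, ψ s = 1)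
    (hdoeblin : ∀ s s', q * ψ s' ≤ (P ^ m) s s')
    (η : S → ℝ) (hη0 : ∀ s, 0 ≤ η s) (hη1 : ∑ s, η s = 1) (hηP : η ᵥ* P = η)
    (r : S → ℝ) (hr0 : ∀ s, 0 ≤ r s) (hr1 : ∀ s, r s ≤ 1)
    (α : ℝ) (hα : α = ∑ s, η s * r s)
    (u : S → ℝ) (hu : ∀ s, u s = ∑' t : ℕ, (((P ^ t) *ᵥ r) s - α)) :
    (∀ s, Summable (fun t : ℕ => |((P ^ t) *ᵥ r) s - α|)) ∧
    (∀ s, r s - α = u s - (P *ᵥ u) s) := by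
  have hmpos : 0 < m := hm
  -- powers are row-stochastic
  have hpow1 : ∀ (n : ℕ) (s : S), ∑ x, (P ^ n) s x = 1 := by
    intro n
    induction n with
    | zero => intro s; simp [Matrix.one_apply]
    | succ n ih =>
      intro s
      rw [pow_succ]
      simp only [Matrix.mul_apply]
      rw [Finset.sum_comm]
      calc ∑ y, ∑ x, (P ^ n) s y * P y x = ∑ y, (P ^ n) s y * ∑ x, P y x := by
            simp [Finset.mul_sum]
        _ = 1 := by simp [hP1, ih s]
  -- stationarity for powers
  have hη_pow : ∀ n : ℕ, η ᵥ* (P ^ n) = η := by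
    intro n
    induction n with
    | zero => simp
    | succ n ih => rw [pow_succ, ← Matrix.vecMul_vecMul, ih, hηP]
  -- α is the η-average of P^t r
  have hα_t : ∀ t : ℕ, α = ∑ x, η x * ((P ^ t) *ᵥ r) x := by
    intro t
    have : ∑ x, η x * ((P ^ t) *ᵥ r) x = η ⬝ᵥ ((P ^ t) *ᵥ r) := rfl
    rw [this, Matrix.dotProduct_mulVec, hη_pow, hα]
    rfl
  -- oscillation bound
  set c : ℝ := 1 - q with hc
  have hc0 : 0 ≤ c := by linarith
  have hc1 : c < 1 := by linarith
  have key : ∀ t : ℕ,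
      univ.sup' univ_nonempty ((P ^ t) *ᵥ r) - univ.inf' univ_nonempty ((P ^ t) *ᵥ r)
        ≤ c ^ (t / m) := by
    intro t
    induction t using Nat.strong_induction_on with
    | _ t ih =>
      rcases Nat.eq_zero_or_pos t with h0 | hpos
      · subst h0
        simp only [pow_zero, Matrix.one_mulVec, Nat.zero_div]
        have h1 : univ.sup' univ_nonempty r ≤ 1 := Finset.sup'_le _ _ fun x _ => hr1 x
        have h2 : (0:ℝ) ≤ univ.inf' univ_nonempty r :=
          Finset.le_inf' _ _ fun x _ => hr0 x
        linarith
      · by_cases hlt : t < m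
        · -- one-step non-expansion
          obtain ⟨t', rfl⟩ : ∃ t', t = t' + 1 := ⟨t - 1, (Nat.succ_pred_eq_of_pos hpos).symm⟩
          have hstep := osc_contract P hP1 0 η hη1
            (fun s s' => by simpa using hP0 s s') ((P ^ t') *ᵥ r)
          rw [Matrix.mulVec_mulVec, ← pow_succ'] at hstep
          have hih := ih t' (Nat.lt_succ_self t')
          have e1 : (t' + 1) / m = 0 := Nat.div_eq_of_lt hlt
          have e2 : t' / m = 0 := Nat.div_eq_of_lt (lt_of_le_of_lt (Nat.le_succ t') hlt)
          rw [e1]; rw [e2] at hih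
          simpa using hstep.trans (by simpa using hih)
        · push_neg at hlt
          have hstep := osc_contract (P ^ m) (hpow1 m) q ψ hψ1 hdoeblin ((P ^ (t - m)) *ᵥ r)
          rw [Matrix.mulVec_mulVec, ← pow_add, Nat.add_sub_cancel' hlt] at hstep
          have hih := ih (t - m) (Nat.sub_lt hpos hmpos)
          have hdiv : t / m = (t - m) / m + 1 := Nat.div_eq_sub_div hmpos hlt
          rw [hdiv, pow_succ]
          calc univ.sup' univ_nonempty ((P ^ t) *ᵥ r) - univ.inf' univ_nonempty ((P ^ t) *ᵥ r)
              ≤ (1 - q) * (univ.sup' univ_nonempty ((P ^ (t - m)) *ᵥ r)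
                  - univ.inf' univ_nonempty ((P ^ (t - m)) *ᵥ r)) := hstep
            _ ≤ (1 - q) * c ^ ((t - m) / m) := by
                exact mul_le_mul_of_nonneg_left hih hc0
            _ = c ^ ((t - m) / m) * c := by rw [hc]; ring
  -- pointwise abs bound
  have habs : ∀ (t : ℕ) (s : S), |((P ^ t) *ᵥ r) s - α| ≤ c ^ (t / m) := by
    intro t s
    have h1 : ((P ^ t) *ᵥ r) s ≤ univ.sup' univ_nonempty ((P ^ t) *ᵥ r) :=
      Finset.le_sup' _ (mem_univ s)
    have h2 : univ.inf' univ_nonempty ((P ^ t) *ᵥ r) ≤ ((P ^ t) *ᵥ r) s :=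
      Finset.inf'_le _ (mem_univ s)
    have h3 : α ≤ univ.sup' univ_nonempty ((P ^ t) *ᵥ r) := by
      rw [hα_t t]
      simpa using wsum_le_sup η ((P ^ t) *ᵥ r) 1 hη0 hη1
    have h4 : univ.inf' univ_nonempty ((P ^ t) *ᵥ r) ≤ α := by
      rw [hα_t t]
      simpa using inf_le_wsum η ((P ^ t) *ᵥ r) 1 hη0 hη1
    have := key t
    rw [abs_sub_le_iff]
    constructor <;> linarith
  -- geometric domination
  set d : ℝ := max c (1/2) with hdd
  have hd0 : 0 < d := lt_of_lt_of_le (by norm_num) (le_max_right _ _)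
  have hd1 : d < 1 := max_lt hc1 (by norm_num)
  set ρ : ℝ := d ^ ((m : ℝ)⁻¹) with hρ
  have hρ0 : 0 ≤ ρ := Real.rpow_nonneg hd0.le _
  have hρ1 : ρ < 1 := Real.rpow_lt_one hd0.le hd1 (by positivity)
  have hgeom : ∀ t : ℕ, c ^ (t / m) ≤ d⁻¹ * ρ ^ t := by
    intro t
    have h1 : c ^ (t / m) ≤ d ^ (t / m) :=
      pow_le_pow_left₀ hc0 (le_max_left _ _) _
    have hexp : (t : ℝ) / m - 1 ≤ ((t / m : ℕ) : ℝ) := by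
      have hlt : t < m * (t / m + 1) := by
        have h2 := Nat.mod_lt t hmpos
        calc t = m * (t / m) + t % m := (Nat.div_add_mod t m).symm
          _ < m * (t / m) + m := by omega
          _ = m * (t / m + 1) := by ring
      have hm' : (0:ℝ) < m := by exact_mod_cast hmpos
      have hltR : (t : ℝ) < m * (((t / m : ℕ) : ℝ) + 1) := by exact_mod_cast hlt
      rw [div_sub_one hm'.ne', div_le_iff₀ hm']
      nlinarith
    have h2 : d ^ (t / m) ≤ d ^ ((t : ℝ) / m - 1) := by
      rw [← Real.rpow_natCast d (t / m)]
      exact Real.rpow_le_rpow_of_exponent_ge hd0 hd1.le hexp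
    have h3 : d ^ ((t : ℝ) / m - 1) = d⁻¹ * ρ ^ t := by
      rw [hρ, ← Real.rpow_natCast (d ^ ((m:ℝ)⁻¹)) t, ← Real.rpow_mul hd0.le,
        Real.rpow_sub hd0, Real.rpow_one,
        show (m:ℝ)⁻¹ * t = (t:ℝ) / m by ring]
      ring
    calc c ^ (t / m) ≤ d ^ (t / m) := h1
      _ ≤ d ^ ((t : ℝ) / m - 1) := h2
      _ = d⁻¹ * ρ ^ t := h3
  have sum1 : ∀ s, Summable (fun t : ℕ => |((P ^ t) *ᵥ r) s - α|) := by
    intro s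
    apply Summable.of_nonneg_of_le (fun t => abs_nonneg _)
      (fun t => (habs t s).trans (hgeom t))
    exact (summable_geometric_of_lt_one hρ0 hρ1).mul_left _
  refine ⟨sum1, fun s => ?_⟩
  have hsummable : ∀ x, Summable (fun t : ℕ => ((P ^ t) *ᵥ r) x - α) :=
    fun x => (sum1 x).of_abs
  have hterm : ∀ (t : ℕ), ∑ x, P s x * (((P ^ t) *ᵥ r) x - α)
      = ((P ^ (t + 1)) *ᵥ r) s - α := by
    intro t
    have : ∑ x, P s x * (((P ^ t) *ᵥ r) x - α)
        = (∑ x, P s x * ((P ^ t) *ᵥ r) x) - α * ∑ x, P s x := by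
      rw [Finset.mul_sum]
      rw [← Finset.sum_sub_distrib]
      congr 1; ext x; ring
    rw [this, hP1, mul_one]
    congr 1
    have : (P *ᵥ ((P ^ t) *ᵥ r)) s = ∑ x, P s x * ((P ^ t) *ᵥ r) x := rfl
    rw [← this, Matrix.mulVec_mulVec, ← pow_succ']
  have hPu : (P *ᵥ u) s = ∑' t : ℕ, (((P ^ (t + 1)) *ᵥ r) s - α) := by
    have : (P *ᵥ u) s = ∑ x, P s x * u x := rfl
    rw [this]
    have e1 : ∀ x, P s x * u x = ∑' t : ℕ, P s x * (((P ^ t) *ᵥ r) x - α) := by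
      intro x
      rw [hu x, tsum_mul_left]
    simp_rw [e1]
    rw [← Summable.tsum_finsetSum (fun x _ => (hsummable x).mul_left (P s x))]
    exact tsum_congr fun t => hterm t
  have hshift := Summable.tsum_eq_zero_add (hsummable s)
  rw [hu s, hPu, hshift]
  simp only [pow_zero, Matrix.one_mulVec]
  ring
end

section
/- Let P be row-stochastic on finite S with stationary distribution η (ηP = η). If (u, α) and (u', α') both solve the Poisson equation r − α·1 = (I − P)u and r − α'·1 = (I − P)u', and P satisfies the Doeblin condition P^m(s,·) ≥ q ψ(·) with q ∈ (0,1], then α = α' and u − u' is a constant vector. -/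
open Matrix

/-- Uniqueness of Poisson-equation solutions up to a constant shift under the
Doeblin condition. -/
theorem poisson_solution_unique_of_doeblin {S : Type*} [Fintype S] [Nonempty S]
    [DecidableEq S]
    (P : Matrix S S ℝ) (hP0 : ∀ s s', 0 ≤ P s s') (hP1 : ∀ s, ∑ s', P s s' = 1)
    (m : ℕ) (hm : 1 ≤ m) (q : ℝ) (hq0 : 0 < q) (hq1 : q ≤ 1)
    (ψ : S → ℝ) (hψ0 : ∀ s, 0 ≤ ψ s) (hψ1 : ∑ s, ψ s = 1)
    (hdoeblin : ∀ s s', q * ψ s' ≤ (P ^ m) s s')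
    (η : S → ℝ) (hη0 : ∀ s, 0 ≤ η s) (hη1 : ∑ s, η s = 1) (hηP : η ᵥ* P = η)
    (r : S → ℝ) (u u' : S → ℝ) (α α' : ℝ)
    (hpois : ∀ s, r s - α = u s - (P *ᵥ u) s)
    (hpois' : ∀ s, r s - α' = u' s - (P *ᵥ u') s) :
    α = α' ∧ ∃ c : ℝ, ∀ s, u s - u' s = c := by
  -- Step 1: any solution has α = η·r
  have key : ∀ (v : S → ℝ) (β : ℝ), (∀ s, r s - β = v s - (P *ᵥ v) s) →
      β = ∑ s, η s * r s := by
    intro v β hv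
    have h1 : ∑ s, η s * (r s - β) = ∑ s, η s * (v s - (P *ᵥ v) s) := by
      apply Finset.sum_congr rfl
      intro s _
      rw [hv s]
    have h2 : ∑ s, η s * (r s - β) = (∑ s, η s * r s) - β := by
      simp only [mul_sub]
      rw [Finset.sum_sub_distrib, ← Finset.sum_mul, hη1, one_mul]
    have h3 : ∑ s, η s * (v s - (P *ᵥ v) s) = 0 := by
      have : ∑ s, η s * (P *ᵥ v) s = ∑ t, (η ᵥ* P) t * v t := by
        simp only [mulVec, vecMul, dotProduct, Finset.mul_sum, Finset.sum_mul]
        rw [Finset.sum_comm]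
        apply Finset.sum_congr rfl
        intro t _
        apply Finset.sum_congr rfl
        intro s _
        ring
      simp only [mul_sub]
      rw [Finset.sum_sub_distrib, this, hηP, sub_self]
    rw [h3, h2] at h1
    linarith
  have hα : α = ∑ s, η s * r s := key u α hpois
  have hα' : α' = ∑ s, η s * r s := key u' α' hpois'
  have hαα : α = α' := by rw [hα, hα']
  refine ⟨hαα, ?_⟩
  -- Step 2: w := u - u' is harmonic
  set w : S → ℝ := fun s => u s - u' s with hw
  have hharm : ∀ s, w s = (P *ᵥ w) s := by
    intro s
    have h1 := hpois s
    have h2 := hpois' s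
    have : (P *ᵥ w) s = (P *ᵥ u) s - (P *ᵥ u') s := by
      simp [mulVec, dotProduct, hw, mul_sub, Finset.sum_sub_distrib]
    rw [this]
    rw [hαα] at h1
    simp only [hw]
    linarith
  -- Step 3: w = P^k w for all k
  have hpow : ∀ k : ℕ, ∀ s, ((P ^ k) *ᵥ w) s = w s := by
    intro k
    induction k with
    | zero => intro s; simp [Matrix.one_mulVec]
    | succ n ih =>
        intro s
        have : (P ^ (n + 1)) *ᵥ w = (P ^ n) *ᵥ (P *ᵥ w) := by
          rw [pow_succ, ← Matrix.mulVec_mulVec]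
        rw [this]
        have hPw : (P *ᵥ w) = w := funext fun t => (hharm t).symm
        rw [hPw]
        exact ih s
  -- Q := P^m is row-stochastic with nonneg entries
  have hQ0 : ∀ k : ℕ, ∀ s s', 0 ≤ (P ^ k) s s' := by
    intro k
    induction k with
    | zero => intro s s'; simp [Matrix.one_apply]; positivity
    | succ n ih =>
        intro s s'
        rw [pow_succ, Matrix.mul_apply]
        exact Finset.sum_nonneg fun t _ => mul_nonneg (ih s t) (hP0 t s')
  have hQ1 : ∀ k : ℕ, ∀ s, ∑ s', (P ^ k) s s' = 1 := by
    intro k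
    induction k with
    | zero => intro s; simp [Matrix.one_apply]
    | succ n ih =>
        intro s
        simp only [pow_succ, Matrix.mul_apply]
        rw [Finset.sum_comm]
        calc ∑ t, ∑ s', (P ^ n) s t * P t s'
            = ∑ t, (P ^ n) s t * ∑ s', P t s' := by
              apply Finset.sum_congr rfl; intro t _; rw [Finset.mul_sum]
          _ = 1 := by simp only [hP1, mul_one]; exact ih s
  set Q := P ^ m with hQdef
  -- Step 4: max/min argument
  obtain ⟨s₀, -, hs₀⟩ := Finset.exists_max_image (Finset.univ : Finset S) w
    ⟨Classical.arbitrary S, Finset.mem_univ _⟩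
  obtain ⟨s₁, -, hs₁⟩ := Finset.exists_min_image (Finset.univ : Finset S) w
    ⟨Classical.arbitrary S, Finset.mem_univ _⟩
  simp only [Finset.mem_univ, forall_true_left, true_implies] at hs₀ hs₁
  have hψw_le : ∑ s', ψ s' * w s' ≤ w s₀ := by
    calc ∑ s', ψ s' * w s' ≤ ∑ s', ψ s' * w s₀ :=
          Finset.sum_le_sum fun s' _ => mul_le_mul_of_nonneg_left (hs₀ s') (hψ0 s')
      _ = w s₀ := by rw [← Finset.sum_mul, hψ1, one_mul]
  have hψw_ge : w s₁ ≤ ∑ s', ψ s' * w s' := by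
    have e : w s₁ = ∑ s', ψ s' * w s₁ := by rw [← Finset.sum_mul, hψ1, one_mul]
    rw [e]
    exact Finset.sum_le_sum fun s' _ => mul_le_mul_of_nonneg_left (hs₁ s') (hψ0 s')
  -- w s₀ ≤ ∑ ψ w
  have split : ∀ s, w s = (∑ s', (Q s s' - q * ψ s') * w s') + q * ∑ s', ψ s' * w s' := by
    intro s
    have h := hpow m s
    rw [mulVec, dotProduct] at h
    rw [← h]
    rw [Finset.mul_sum, ← Finset.sum_add_distrib]
    apply Finset.sum_congr rfl
    intro s' _
    ring
  have hrest : ∀ s, ∑ s', (Q s s' - q * ψ s') = 1 - q := by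
    intro s
    rw [Finset.sum_sub_distrib, hQ1 m s, ← Finset.mul_sum, hψ1, mul_one]
  have hmax : w s₀ ≤ ∑ s', ψ s' * w s' := by
    have h1 : ∑ s', (Q s₀ s' - q * ψ s') * w s' ≤ (1 - q) * w s₀ := by
      calc ∑ s', (Q s₀ s' - q * ψ s') * w s'
          ≤ ∑ s', (Q s₀ s' - q * ψ s') * w s₀ :=
            Finset.sum_le_sum fun s' _ => mul_le_mul_of_nonneg_left (hs₀ s')
              (by linarith [hdoeblin s₀ s'])
        _ = (1 - q) * w s₀ := by rw [← Finset.sum_mul, hrest s₀]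
    have h2 := split s₀
    nlinarith
  have hmin : ∑ s', ψ s' * w s' ≤ w s₁ := by
    have h1 : (1 - q) * w s₁ ≤ ∑ s', (Q s₁ s' - q * ψ s') * w s' := by
      have e : (1 - q) * w s₁ = ∑ s', (Q s₁ s' - q * ψ s') * w s₁ := by
        rw [← Finset.sum_mul, hrest s₁]
      rw [e]
      exact Finset.sum_le_sum fun s' _ => mul_le_mul_of_nonneg_left (hs₁ s')
        (by linarith [hdoeblin s₁ s'])
    have h2 := split s₁
    nlinarith
  refine ⟨w s₀, fun s => ?_⟩
  have : w s₀ ≤ w s₁ := by linarith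
  have h1 := hs₀ s
  have h2 := hs₁ s
  show w s = w s₀
  linarith
end
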